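/- Let X be a Banach space and let (A_m)_{m≥0} be a sequence of bounded linear operators on X admitting an exponential dichotomy on ℤ₀⁺ with constants C, λ > 0. Then there exists c₀ > 0 (depending only on C and λ) such that whenever f_n : X → X (n ≥ 0) satisfy ‖f_n(x) − f_n(y)‖ ≤ c‖x − y‖ for all n ≥ 0 and x, y ∈ X with 0 < c ≤ c₀, the system x_{n+1} = F_n(x_n), n ≥ 0 (where F_n = A_n + f_n) has the ℓ^∞-shadowing property: for every ε > 0 there exists δ > 0 such that every sequence (y_n)_{n≥0} ⊂ X with sup_{n≥0} ‖y_{n+1} − F_n(y_n)‖ ≤ δ admits a sequence (x_n)_{n≥0} with x_{n+1} = F_n(x_n) for all n ≥ 0 and sup_{n≥0} ‖x_n − y_n‖ ≤ ε. -/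

import Mathlib

/-!
The dichotomy gives a bounded solution operator `G` on `ℓ^∞`: the sequence
`(G h)_n = ∑_{k<n} 𝒜(n,k+1) P_{k+1} h_k - ∑_{k≥n} 𝒜(n,k+1) (Id - P_{k+1}) h_k`
solves `u_{n+1} = A_n u_n + h_n`, and the two geometric series give `‖G‖ ≤ 2C / (1 - e^{-λ})`.
Writing the sought orbit as `x = y + z`, the orbit equation becomes the fixed point equation
`z = G (N z)` with `(N z)_k = f_k(y_k + z_k) - f_k(y_k) - (y_{k+1} - F_k(y_k))`. The map `N` is
`c`-Lipschitz on `ℓ^∞` and `‖N 0‖ ≤ δ`, so for `c ‖G‖ < 1` Banach's fixed point theorem gives `z`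
with `‖z‖ ≤ ‖G‖ δ / (1 - c ‖G‖)`.
-/

/-- The forward products `𝒜(m,n) = A_{m-1} ⋯ A_n` for `m ≥ n ≥ 0`
(equal to the identity when `m ≤ n`). -/
noncomputable def calAN {X : Type*} [NormedAddCommGroup X] [NormedSpace ℝ X]
    (A : ℕ → X →L[ℝ] X) (m n : ℕ) : X →L[ℝ] X :=
  (List.range (m - n)).foldl (fun B k => (A (n + k)).comp B)
    (ContinuousLinearMap.id ℝ X)

/-- The sequence `(A_m)_{m ≥ 0}` admits an exponential dichotomy on `ℤ₀⁺` with constants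
`C, lam > 0`.  For `m ≤ n`, the operator `𝒜(m,n)` (the inverse of `𝒜(n,m)` restricted to
`Ker P_m`) is described implicitly: `w = 𝒜(m,n)(Id - P_n) x` iff `w ∈ Ker P_m` and
`𝒜(n,m) w = x - P_n x`. -/
def ExpDichotomyN {X : Type*} [NormedAddCommGroup X] [NormedSpace ℝ X]
    (A : ℕ → X →L[ℝ] X) (C lam : ℝ) : Prop :=
  ∃ P : ℕ → X →L[ℝ] X,
    (∀ m, (P m).comp (P m) = P m) ∧
    (∀ m, (P (m + 1)).comp (A m) = (A m).comp (P m)) ∧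
    (∀ m, Set.BijOn (A m) (LinearMap.ker (P m : X →ₗ[ℝ] X) : Set X)
      (LinearMap.ker (P (m + 1) : X →ₗ[ℝ] X) : Set X)) ∧
    (∀ m n : ℕ, n ≤ m → ‖(calAN A m n).comp (P n)‖ ≤ C * Real.exp (-lam * ((m : ℝ) - n))) ∧
    (∀ m n : ℕ, m ≤ n → ∀ x w : X, w ∈ LinearMap.ker (P m : X →ₗ[ℝ] X) →
      calAN A n m w = x - P n x → ‖w‖ ≤ C * Real.exp (-lam * ((n : ℝ) - m)) * ‖x‖)

open BoundedContinuousFunction NNReal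

theorem exists_lipschitzWith_superposition {α X Y : Type*} [TopologicalSpace α]
    [DiscreteTopology α] [Nonempty α] [NormedAddCommGroup X] [NormedAddCommGroup Y]
    {g : α → X → Y} {c : ℝ≥0} (hg : ∀ k, LipschitzWith c (g k)) {δ : ℝ}
    (hg0 : ∀ k, ‖g k 0‖ ≤ δ) :
    ∃ Φ : (α →ᵇ X) → (α →ᵇ Y), LipschitzWith c Φ ∧ ‖Φ 0‖ ≤ δ ∧ ∀ z k, Φ z k = g k (z k) := by
  have hbound : ∀ (z : α →ᵇ X) k, ‖g k (z k)‖ ≤ c * ‖z‖ + δ := fun z k =>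
    calc ‖g k (z k)‖ ≤ ‖g k (z k) - g k 0‖ + ‖g k 0‖ := norm_le_norm_sub_add _ _
      _ ≤ c * ‖z k‖ + δ := by
          gcongr
          · simpa [dist_eq_norm] using (hg k).dist_le_mul (z k) 0
          · exact hg0 k
      _ ≤ c * ‖z‖ + δ := by gcongr; exact z.norm_coe_le_norm k
  refine ⟨fun z => ofNormedAddCommGroupDiscrete (fun k => g k (z k)) _ (hbound z),
    LipschitzWith.of_dist_le_mul fun z w => ?_, ?_, fun _ _ => rfl⟩
  · refine (dist_le (by positivity)).2 fun k => ((hg k).dist_le_mul _ _).trans ?_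
    gcongr
    exact dist_coe_le_dist k
  · have hδ : 0 ≤ δ := (norm_nonneg _).trans (hg0 (Classical.arbitrary α))
    exact (norm_le hδ).2 fun k => by simpa using hg0 k

section

variable {X : Type*} [NormedAddCommGroup X] [NormedSpace ℝ X]

section calAN

variable (A : ℕ → X →L[ℝ] X)

theorem calAN_self (n : ℕ) : calAN A n n = ContinuousLinearMap.id ℝ X := by
  simp [calAN]

theorem calAN_succ_left {m n : ℕ} (h : n ≤ m) :
    calAN A (m + 1) n = (A m).comp (calAN A m n) := by
  unfold calAN
  rw [Nat.succ_sub h, List.range_succ, List.foldl_append]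
  simp [Nat.add_sub_cancel' h]

theorem calAN_succ_right {m n : ℕ} (h : n < m) :
    calAN A m n = (calAN A m (n + 1)).comp (A n) := by
  induction m, h using Nat.le_induction with
  | base => ext x; simp [calAN_succ_left A le_rfl, calAN_self]
  | succ m hm ih =>
    rw [calAN_succ_left A (by omega), ih, calAN_succ_left A hm, ContinuousLinearMap.comp_assoc]

theorem bijOn_calAN {p : ℕ → Submodule ℝ X} (hA : ∀ m, Set.BijOn (A m) (p m) (p (m + 1)))
    {m n : ℕ} (h : n ≤ m) : Set.BijOn (calAN A m n) (p n) (p m) := by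
  induction m, h using Nat.le_induction with
  | base => simpa [calAN_self] using Set.bijOn_id (p n : Set X)
  | succ m hm ih =>
    rw [calAN_succ_left A hm, ContinuousLinearMap.coe_comp]
    exact (hA m).comp ih

end calAN

theorem exists_inverse_on_ker_of_bijOn {T Q : X →L[ℝ] X} {p : Submodule ℝ X}
    (hQ : Q.comp Q = Q) (hT : Set.BijOn T p (LinearMap.ker (Q : X →ₗ[ℝ] X))) {M : ℝ}
    (hM : ∀ x w, w ∈ p → T w = x - Q x → ‖w‖ ≤ M * ‖x‖) :
    ∃ V : X →L[ℝ] X, ∀ x, V x ∈ p ∧ T (V x) = x - Q x := by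
  let e : p ≃ₗ[ℝ] LinearMap.ker (Q : X →ₗ[ℝ] X) :=
    .ofBijective ((T : X →ₗ[ℝ] X).restrict hT.mapsTo) hT.bijective
  have hproj : ∀ x,
      (LinearMap.id - (Q : X →ₗ[ℝ] X) : X →ₗ[ℝ] X) x ∈ LinearMap.ker (Q : X →ₗ[ℝ] X) := by
    intro x
    simp [← ContinuousLinearMap.comp_apply, hQ]
  let V : X →ₗ[ℝ] X := p.subtype ∘ₗ e.symm.toLinearMap ∘ₗ LinearMap.codRestrict _ _ hproj
  have hV : ∀ x, V x ∈ p ∧ T (V x) = x - Q x := fun x =>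
    ⟨(e.symm _).2, congrArg Subtype.val (e.apply_symm_apply _)⟩
  exact ⟨V.mkContinuous M fun x => hM x _ (hV x).1 (hV x).2, hV⟩

/-- `V n k` stands for `𝒜(n,k) (Id - P_k)` on `n ≤ k` (its values for `n > k` are junk), and `q`
for `e^{-λ}`. -/
structure DichotomySplitting (A : ℕ → X →L[ℝ] X) (C q : ℝ) where
  P : ℕ → X →L[ℝ] X
  V : ℕ → ℕ → X →L[ℝ] X
  C_nonneg : 0 ≤ C
  q_nonneg : 0 ≤ q
  q_lt_one : q < 1
  norm_calAN_P_le : ∀ m n, n ≤ m → ∀ x, ‖calAN A m n (P n x)‖ ≤ C * q ^ (m - n) * ‖x‖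
  norm_V_le : ∀ n k, n ≤ k → ∀ x, ‖V n k x‖ ≤ C * q ^ (k - n) * ‖x‖
  apply_V : ∀ n k, n < k → ∀ x, A n (V n k x) = V (n + 1) k x
  V_self : ∀ k x, V k k x = x - P k x

theorem exp_neg_mul_natCast_sub (lam : ℝ) {m n : ℕ} (h : n ≤ m) :
    Real.exp (-lam * ((m : ℝ) - n)) = Real.exp (-lam) ^ (m - n) := by
  rw [← Nat.cast_sub h, mul_comm, Real.exp_nat_mul]

theorem ExpDichotomyN.nonempty_splitting {A : ℕ → X →L[ℝ] X} {C lam : ℝ}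
    (h : ExpDichotomyN A C lam) (hC : 0 ≤ C) (hlam : 0 < lam) :
    Nonempty (DichotomySplitting A C (Real.exp (-lam))) := by
  obtain ⟨P, hP, -, hA, hstable, hunstable⟩ := h
  have hV : ∀ n k, ∃ V : X →L[ℝ] X, n ≤ k →
      ∀ x, V x ∈ LinearMap.ker (P n : X →ₗ[ℝ] X) ∧ calAN A k n (V x) = x - P k x := by
    intro n k
    by_cases hnk : n ≤ k
    · obtain ⟨V, hV⟩ :=
        exists_inverse_on_ker_of_bijOn (hP k) (bijOn_calAN A hA hnk) (hunstable n k hnk)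
      exact ⟨V, fun _ => hV⟩
    · exact ⟨0, fun h => absurd h hnk⟩
  choose V hV using hV
  refine ⟨⟨P, V, hC, (Real.exp_pos _).le, Real.exp_lt_one_iff.2 (neg_lt_zero.2 hlam),
    ?_, ?_, ?_, ?_⟩⟩
  · intro m n hnm x
    rw [← exp_neg_mul_natCast_sub lam hnm]
    exact ((calAN A m n).comp (P n)).le_of_opNorm_le (hstable m n hnm) x
  · intro n k hnk x
    rw [← exp_neg_mul_natCast_sub lam hnk]
    exact hunstable n k hnk x _ (hV n k hnk x).1 (hV n k hnk x).2
  · intro n k hnk x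
    apply (bijOn_calAN A hA hnk).injOn ((hA n).mapsTo (hV n k hnk.le x).1) (hV (n + 1) k hnk x).1
    rw [← ContinuousLinearMap.comp_apply, ← calAN_succ_right A hnk, (hV n k hnk.le x).2,
      (hV (n + 1) k hnk x).2]
  · intro k x
    simpa [calAN_self] using (hV k k le_rfl x).2

namespace DichotomySplitting

variable {A : ℕ → X →L[ℝ] X} {C q : ℝ} (D : DichotomySplitting A C q)

noncomputable def green (h : ℕ →ᵇ X) (n : ℕ) : X :=
  ∑ k ∈ Finset.range n, calAN A n (k + 1) (D.P (k + 1) (h k)) -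
    ∑' j, D.V n (n + j + 1) (h (n + j))

theorem norm_V_apply_le (h : ℕ →ᵇ X) (n j : ℕ) :
    ‖D.V n (n + j + 1) (h (n + j))‖ ≤ C * ‖h‖ * q ^ j :=
  calc ‖D.V n (n + j + 1) (h (n + j))‖ ≤ C * q ^ (j + 1) * ‖h (n + j)‖ := by
        simpa [add_assoc] using D.norm_V_le n (n + j + 1) (by omega) (h (n + j))
    _ ≤ C * q ^ j * ‖h‖ := by
        have hC := D.C_nonneg
        have hq := D.q_nonneg
        gcongr C * ?_ * ?_
        · exact pow_le_pow_of_le_one hq D.q_lt_one.le (Nat.le_succ j)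
        · exact h.norm_coe_le_norm _
    _ = C * ‖h‖ * q ^ j := by ring

theorem norm_tsum_V_apply_le (h : ℕ →ᵇ X) (n : ℕ) :
    ‖∑' j, D.V n (n + j + 1) (h (n + j))‖ ≤ C * ‖h‖ / (1 - q) :=
  tsum_of_norm_bounded ((hasSum_geometric_of_lt_one D.q_nonneg D.q_lt_one).mul_left _)
    (D.norm_V_apply_le h n)

theorem norm_sum_calAN_P_apply_le (h : ℕ →ᵇ X) (n : ℕ) :
    ‖∑ k ∈ Finset.range n, calAN A n (k + 1) (D.P (k + 1) (h k))‖ ≤ C * ‖h‖ / (1 - q) := by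
  have hC := D.C_nonneg
  have hq := D.q_nonneg
  calc ‖∑ k ∈ Finset.range n, calAN A n (k + 1) (D.P (k + 1) (h k))‖
      ≤ ∑ k ∈ Finset.range n, C * ‖h‖ * q ^ (n - 1 - k) := by
        refine (norm_sum_le _ _).trans (Finset.sum_le_sum fun k hk => ?_)
        have hkn : k + 1 ≤ n := Finset.mem_range.1 hk
        calc ‖calAN A n (k + 1) (D.P (k + 1) (h k))‖ ≤ C * q ^ (n - (k + 1)) * ‖h k‖ :=
              D.norm_calAN_P_le n (k + 1) hkn (h k)
          _ ≤ C * ‖h‖ * q ^ (n - 1 - k) := by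
              rw [show n - (k + 1) = n - 1 - k by omega, mul_right_comm]
              gcongr
              exact h.norm_coe_le_norm k
    _ = C * ‖h‖ * ∑ k ∈ Finset.range n, q ^ k := by
        rw [← Finset.mul_sum, Finset.sum_range_reflect (q ^ ·) n]
    _ ≤ C * ‖h‖ * (1 / (1 - q)) := by
        gcongr
        rw [Finset.range_eq_Ico]
        simpa using geom_sum_Ico_le_of_lt_one (m := 0) (n := n) D.q_nonneg D.q_lt_one
    _ = C * ‖h‖ / (1 - q) := by ring

theorem green_const_nonneg (D : DichotomySplitting A C q) : 0 ≤ 2 * C / (1 - q) :=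
  div_nonneg (mul_nonneg zero_le_two D.C_nonneg) (sub_nonneg.2 D.q_lt_one.le)

theorem norm_green_le (h : ℕ →ᵇ X) (n : ℕ) : ‖D.green h n‖ ≤ 2 * C / (1 - q) * ‖h‖ :=
  calc ‖D.green h n‖ ≤ C * ‖h‖ / (1 - q) + C * ‖h‖ / (1 - q) :=
        (norm_sub_le _ _).trans
          (add_le_add (D.norm_sum_calAN_P_apply_le h n) (D.norm_tsum_V_apply_le h n))
    _ = 2 * C / (1 - q) * ‖h‖ := by ring

theorem green_smul (a : ℝ) (h : ℕ →ᵇ X) (n : ℕ) : D.green (a • h) n = a • D.green h n := by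
  simp only [green, coe_smul, map_smul, ← Finset.smul_sum, tsum_const_smul'', smul_sub]

variable [CompleteSpace X]

theorem summable_V_apply (h : ℕ →ᵇ X) (n : ℕ) :
    Summable fun j => D.V n (n + j + 1) (h (n + j)) :=
  .of_norm_bounded ((summable_geometric_of_lt_one D.q_nonneg D.q_lt_one).mul_left _)
    (D.norm_V_apply_le h n)

theorem green_add (h h' : ℕ →ᵇ X) (n : ℕ) :
    D.green (h + h') n = D.green h n + D.green h' n := by
  have htail := (D.summable_V_apply h n).tsum_add (D.summable_V_apply h' n)
  simp only [green, coe_add, Pi.add_apply, map_add, Finset.sum_add_distrib, htail]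
  abel

theorem green_succ (h : ℕ →ᵇ X) (n : ℕ) : D.green h (n + 1) = A n (D.green h n) + h n := by
  have hhead : A n (∑ k ∈ Finset.range n, calAN A n (k + 1) (D.P (k + 1) (h k)))
      = ∑ k ∈ Finset.range n, calAN A (n + 1) (k + 1) (D.P (k + 1) (h k)) := by
    rw [map_sum]
    refine Finset.sum_congr rfl fun k hk => ?_
    rw [calAN_succ_left A (Finset.mem_range.1 hk), ContinuousLinearMap.comp_apply]
  have htail : A n (∑' j, D.V n (n + j + 1) (h (n + j)))
      = (h n - D.P (n + 1) (h n)) + ∑' j, D.V (n + 1) (n + 1 + j + 1) (h (n + 1 + j)) := by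
    have hsum : Summable fun j => A n (D.V n (n + j + 1) (h (n + j))) :=
      (D.summable_V_apply h n).map (A n) (A n).continuous
    rw [(A n).map_tsum (D.summable_V_apply h n), hsum.tsum_eq_zero_add]
    congr 1
    · simpa [D.V_self] using D.apply_V n (n + 1) n.lt_succ_self (h n)
    · refine tsum_congr fun j => ?_
      rw [D.apply_V n _ (by omega)]
      congr 2 <;> omega
  rw [green, green, map_sub, hhead, htail, Finset.sum_range_succ, calAN_self,
    ContinuousLinearMap.id_apply]
  abel

noncomputable def greenOp : (ℕ →ᵇ X) →L[ℝ] (ℕ →ᵇ X) :=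
  LinearMap.mkContinuous
    { toFun h := ofNormedAddCommGroupDiscrete (D.green h) _ (D.norm_green_le h)
      map_add' h h' := by ext n; exact D.green_add h h' n
      map_smul' a h := by ext n; exact D.green_smul a h n }
    (2 * C / (1 - q)) fun h =>
      (norm_le (mul_nonneg D.green_const_nonneg (norm_nonneg h))).2 (D.norm_green_le h)

theorem norm_greenOp_le : ‖D.greenOp‖ ≤ 2 * C / (1 - q) :=
  LinearMap.mkContinuous_norm_le _ D.green_const_nonneg _

theorem greenOp_succ (h : ℕ →ᵇ X) (n : ℕ) :
    D.greenOp h (n + 1) = A n (D.greenOp h n) + h n :=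
  D.green_succ h n

end DichotomySplitting

theorem exists_orbit_near_of_solutionOp [CompleteSpace X] {A : ℕ → X →L[ℝ] X}
    (G : (ℕ →ᵇ X) →L[ℝ] (ℕ →ᵇ X)) (hG : ∀ h n, G h (n + 1) = A n (G h n) + h n)
    {f : ℕ → X → X} {c : ℝ≥0} (hf : ∀ n, LipschitzWith c (f n)) (hGc : ‖G‖ * c < 1)
    {y : ℕ → X} {δ : ℝ} (hy : ∀ n, ‖y (n + 1) - (A n (y n) + f n (y n))‖ ≤ δ) :
    ∃ x : ℕ → X, (∀ n, x (n + 1) = A n (x n) + f n (x n)) ∧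
      ∀ n, ‖x n - y n‖ ≤ ‖G‖ * δ / (1 - ‖G‖ * c) := by
  obtain ⟨Φ, hΦ, hΦ0, hΦ_apply⟩ := exists_lipschitzWith_superposition
    (g := fun k u => f k (y k + u) - f k (y k) - (y (k + 1) - (A k (y k) + f k (y k))))
    (fun k => LipschitzWith.of_dist_le_mul fun u v => by
      simpa [dist_add_left] using (hf k).dist_le_mul (y k + u) (y k + v))
    (fun k => by simpa [norm_sub_rev] using hy k)
  have hT : ContractingWith (‖G‖₊ * c) (G ∘ Φ) := ⟨by exact_mod_cast hGc, G.lipschitz.comp hΦ⟩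
  set z := hT.fixedPoint (G ∘ Φ)
  have hz : G (Φ z) = z := hT.fixedPoint_isFixedPt
  have hz_norm : ‖z‖ ≤ ‖G‖ * δ / (1 - ‖G‖ * c) := by
    have := hT.dist_fixedPoint_le 0
    simp only [dist_zero_left, Function.comp_apply, NNReal.coe_mul, coe_nnnorm] at this
    refine this.trans (div_le_div_of_nonneg_right ?_ (sub_nonneg.2 hGc.le))
    exact G.le_of_opNorm_le le_rfl _ |>.trans (by gcongr)
  refine ⟨fun n => y n + z n, fun n => ?_, fun n => ?_⟩
  · have hzn := hG (Φ z) n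
    rw [hz, hΦ_apply] at hzn
    show y (n + 1) + z (n + 1) = A n (y n + z n) + f n (y n + z n)
    rw [hzn, map_add]
    abel
  · simpa using (z.norm_coe_le_norm n).trans hz_norm

end

/-- Theorem 4.1: if `(A_m)_{m≥0}` admits an exponential dichotomy on `ℤ₀⁺` then, whenever the
Lipschitz constants of the perturbations `f_n` are sufficiently small, the system
`x_{n+1} = A_n x_n + f_n(x_n)`, `n ≥ 0`, has the `ℓ^∞`-shadowing property. -/
theorem one_sided_shadowing
    {X : Type*} [NormedAddCommGroup X] [NormedSpace ℝ X] [CompleteSpace X]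
    (A : ℕ → X →L[ℝ] X) (C lam : ℝ) (hC : 0 < C) (hlam : 0 < lam)
    (h : ExpDichotomyN A C lam) :
    ∃ c₀ : ℝ, 0 < c₀ ∧ ∀ c : ℝ, 0 < c → c ≤ c₀ →
      ∀ f : ℕ → X → X, (∀ n : ℕ, ∀ x y : X, ‖f n x - f n y‖ ≤ c * ‖x - y‖) →
      ∀ ε : ℝ, 0 < ε → ∃ δ : ℝ, 0 < δ ∧ ∀ y : ℕ → X,
        (∀ n : ℕ, ‖y (n + 1) - (A n (y n) + f n (y n))‖ ≤ δ) →
        ∃ x : ℕ → X, (∀ n : ℕ, x (n + 1) = A n (x n) + f n (x n)) ∧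
          ∀ n : ℕ, ‖x n - y n‖ ≤ ε := by
  obtain ⟨D⟩ := h.nonempty_splitting hC.le hlam
  set K := 2 * C / (1 - Real.exp (-lam))
  have hK : 0 < K := div_pos (by positivity) (sub_pos.2 D.q_lt_one)
  have hGK : ‖D.greenOp‖ ≤ K := D.norm_greenOp_le
  refine ⟨1 / (2 * K), by positivity, fun c hc hcK f hf ε hε =>
    ⟨ε / (2 * K), by positivity, fun y hy => ?_⟩⟩
  have hGc : ‖D.greenOp‖ * c ≤ 1 / 2 :=
    calc ‖D.greenOp‖ * c ≤ K * (1 / (2 * K)) := by gcongr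
      _ = 1 / 2 := by field_simp
  obtain ⟨x, hx, hxy⟩ :=
    exists_orbit_near_of_solutionOp D.greenOp D.greenOp_succ (c := ⟨c, hc.le⟩)
    (fun n => LipschitzWith.of_dist_le_mul fun u v => by
      rw [dist_eq_norm, dist_eq_norm]; exact hf n u v)
    (hGc.trans_lt one_half_lt_one) hy
  refine ⟨x, hx, fun n => (hxy n).trans ?_⟩
  calc ‖D.greenOp‖ * (ε / (2 * K)) / (1 - ‖D.greenOp‖ * c) ≤ K * (ε / (2 * K)) / (1 / 2) := by
        gcongr
        linarith
    _ = ε := by field_simp
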